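/- Let Γ be any defining graph, A_Γ the associated Artin group, s and t standard generators, and g ∈ A_Γ such that g t g⁻¹ ∈ ⟨s⟩. Then g t g⁻¹ = s. -/

import Mathlib

/-- The alternating product `a * b * a * ⋯` with `n` factors. -/
def altProd {M : Type*} [Monoid M] : M → M → ℕ → M
  | _, _, 0 => 1
  | a, b, n + 1 => a * altProd b a n

/-- A defining graph: a finite simplicial graph with each edge labelled by a natural
number `≥ 2`. -/
structure DefiningGraph (V : Type*) where
  graph : SimpleGraph V
  label : V → V → ℕ
  label_symm : ∀ a b, label a b = label b a
  two_le_label : ∀ a b, graph.Adj a b → 2 ≤ label a b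

/-- The Artin relations `π(a,b;m_ab) = π(b,a;m_ab)`, one for each edge `{a,b}` of the
defining graph. -/
def DefiningGraph.rels {V : Type*} (Γ : DefiningGraph V) : Set (FreeGroup V) :=
  {r | ∃ a b, Γ.graph.Adj a b ∧
    r = altProd (FreeGroup.of a) (FreeGroup.of b) (Γ.label a b) *
      (altProd (FreeGroup.of b) (FreeGroup.of a) (Γ.label a b))⁻¹}

/-- The Artin group of a defining graph, as a presented group. The standard generator
corresponding to a vertex `v` is `PresentedGroup.of v`. -/
abbrev ArtinGroup {V : Type*} (Γ : DefiningGraph V) : Type _ := PresentedGroup Γ.rels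

/-
Both sides of every Artin relation have the same length, so sending every standard generator
to `1 ∈ ℤ` defines a homomorphism `A_Γ → ℤ`. A conjugate of `t` has length `1` and `s ^ n` has
length `n`, so `g t g⁻¹ = s ^ n` forces `n = 1`.
-/

theorem map_altProd {M N F : Type*} [Monoid M] [Monoid N] [FunLike F M N]
    [MonoidHomClass F M N] (f : F) (a b : M) (n : ℕ) :
    f (altProd a b n) = altProd (f a) (f b) n := by
  induction n generalizing a b with
  | zero => simp [altProd]
  | succ n ih => rw [altProd, map_mul, ih, altProd]

theorem altProd_self {M : Type*} [Monoid M] (x : M) (n : ℕ) : altProd x x n = x ^ n := by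
  induction n with
  | zero => rw [altProd, pow_zero]
  | succ n ih => rw [altProd, ih, pow_succ']

namespace ArtinGroup

variable {V : Type*} (Γ : DefiningGraph V)

def length : ArtinGroup Γ →* Multiplicative ℤ :=
  PresentedGroup.toGroup (f := fun _ => Multiplicative.ofAdd 1) <| by
    rintro r ⟨a, b, -, rfl⟩
    simp only [map_mul, map_inv, map_altProd, FreeGroup.lift_apply_of, altProd_self,
      mul_inv_cancel]

variable {Γ}

theorem length_of (v : V) : length Γ (PresentedGroup.of v) = Multiplicative.ofAdd 1 :=
  PresentedGroup.toGroup.of _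

theorem length_zpow_of (v : V) (n : ℤ) :
    length Γ (PresentedGroup.of v ^ n) = Multiplicative.ofAdd n := by
  rw [map_zpow, length_of, ← ofAdd_zsmul, smul_eq_mul, mul_one]

theorem length_conj (g x : ArtinGroup Γ) : length Γ (g * x * g⁻¹) = length Γ x := by
  rw [map_mul, map_mul, map_inv, mul_inv_cancel_comm]

end ArtinGroup

theorem conj_eq_of_conj_mem_cyclic_general {V : Type*} (Γ : DefiningGraph V)
    (s t : V) (g : ArtinGroup Γ)
    (h : g * PresentedGroup.of t * g⁻¹ ∈
      Subgroup.closure {(PresentedGroup.of s : ArtinGroup Γ)}) :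
    g * PresentedGroup.of t * g⁻¹ = PresentedGroup.of s := by
  obtain ⟨n, hn⟩ := Subgroup.mem_closure_singleton.mp h
  have hn_one : n = 1 := Multiplicative.ofAdd.injective <| by
    rw [← ArtinGroup.length_zpow_of s, hn, ArtinGroup.length_conj, ArtinGroup.length_of]
  rw [← hn, hn_one, zpow_one]

/-- If a conjugate of the standard generator `t` lies in the cyclic subgroup `⟨s⟩` generated
by the standard generator `s`, then that conjugate equals `s`. -/
theorem conj_eq_of_conj_mem_cyclic {V : Type*} [Fintype V] (Γ : DefiningGraph V)
    (s t : V) (g : ArtinGroup Γ)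
    (h : g * PresentedGroup.of t * g⁻¹ ∈
      Subgroup.closure {(PresentedGroup.of s : ArtinGroup Γ)}) :
    g * PresentedGroup.of t * g⁻¹ = PresentedGroup.of s :=
  conj_eq_of_conj_mem_cyclic_general Γ s t g h
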